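/- If f : 𝔻 → 𝔻 is holomorphic, onto, and |f(z)| → 1 as |z| → 1, then f is a finite Blaschke product, i.e., f(z) = e^{is}∏_{k=1}^{d}(z−a_k)/(1−z·conj(a_k)) for some d ≥ 1, s ∈ ℝ, and a_1,…,a_d ∈ 𝔻. -/

import Mathlib

open Complex ComplexConjugate Filter Metric Set Topology

/-!
Divide out the zeros of `f` one at a time: if `f = B * h` with `B` a finite Blaschke product and
`h` holomorphic, a zero `a` of `h` gives `h = blaschkeFactor a * g` with `g` holomorphic.
Since `|B| → 1` and `|f| → 1` at the circle, also `|h| → 1`, so `|h| ≤ 1` by the maximum principle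
and `|f| ≤ |B|`. The zeros of `f` stay in a disk `|z| ≤ R < 1`, on which every factor is bounded by
some `c < 1` at a fixed point `z₀` with `f z₀ ≠ 0`; then `|f z₀| ≤ cⁿ` after `n` steps, so the
process stops at a zero-free cofactor `h`. The maximum principle for `h` and `h⁻¹` forces `|h| = 1`,
so `h` is a unimodular constant, and a zero of `f` (from surjectivity) makes the product nonempty.
-/

noncomputable def blaschkeFactor (a z : ℂ) : ℂ := (z - a) / (1 - z * conj a)

noncomputable def blaschkeProduct {n : ℕ} (a : Fin n → ℂ) (z : ℂ) : ℂ :=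
  ∏ k, blaschkeFactor (a k) z

section BlaschkeFactor

variable {a z : ℂ}

lemma sq_norm_one_sub_mul_conj_sub_sq_norm_sub (a z : ℂ) :
    ‖1 - z * conj a‖ ^ 2 - ‖z - a‖ ^ 2 = (1 - ‖z‖ ^ 2) * (1 - ‖a‖ ^ 2) := by
  simp only [← normSq_eq_norm_sq, normSq_apply, sub_re, sub_im, one_re, one_im, mul_re, mul_im,
    conj_re, conj_im]
  ring

lemma one_sub_norm_le_norm_one_sub_mul_conj (hz : ‖z‖ ≤ 1) : 1 - ‖a‖ ≤ ‖1 - z * conj a‖ :=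
  calc 1 - ‖a‖ ≤ ‖(1 : ℂ)‖ - ‖z * conj a‖ := by
        rw [norm_one, norm_mul, RCLike.norm_conj]
        nlinarith [norm_nonneg a]
    _ ≤ ‖1 - z * conj a‖ := norm_sub_norm_le _ _

lemma norm_one_sub_mul_conj_pos (hz : ‖z‖ ≤ 1) (ha : ‖a‖ < 1) : 0 < ‖1 - z * conj a‖ := by
  linarith [one_sub_norm_le_norm_one_sub_mul_conj (a := a) hz]

lemma blaschkeFactor_self (a : ℂ) : blaschkeFactor a a = 0 := by
  simp [blaschkeFactor]

lemma norm_blaschkeFactor_lt_one (hz : ‖z‖ < 1) (ha : ‖a‖ < 1) : ‖blaschkeFactor a z‖ < 1 := by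
  have hpos := norm_one_sub_mul_conj_pos hz.le ha
  have hid := sq_norm_one_sub_mul_conj_sub_sq_norm_sub a z
  have hprod : 0 < (1 - ‖z‖ ^ 2) * (1 - ‖a‖ ^ 2) := by
    apply mul_pos <;> nlinarith [norm_nonneg z, norm_nonneg a]
  rw [blaschkeFactor, norm_div, div_lt_one hpos]
  exact lt_of_pow_lt_pow_left₀ 2 hpos.le (by linarith)

lemma one_sub_mul_le_sq_norm_blaschkeFactor (hz : ‖z‖ ≤ 1) (ha : ‖a‖ < 1) :
    1 - (1 - ‖z‖ ^ 2) * ((1 + ‖a‖) / (1 - ‖a‖)) ≤ ‖blaschkeFactor a z‖ ^ 2 := by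
  have hw := one_sub_norm_le_norm_one_sub_mul_conj (a := a) hz
  have hid := sq_norm_one_sub_mul_conj_sub_sq_norm_sub a z
  have hs : 0 < 1 - ‖a‖ := by linarith
  have ht : 0 ≤ (1 - ‖z‖ ^ 2) * (1 + ‖a‖) := by
    apply mul_nonneg <;> nlinarith [norm_nonneg z, norm_nonneg a]
  have hK : (1 - ‖z‖ ^ 2) * (1 - ‖a‖ ^ 2) ≤
      (1 - ‖z‖ ^ 2) * ((1 + ‖a‖) / (1 - ‖a‖)) * ‖1 - z * conj a‖ ^ 2 := by
    rw [mul_div_assoc', div_mul_eq_mul_div, le_div_iff₀ hs]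
    nlinarith [mul_le_mul_of_nonneg_left (pow_le_pow_left₀ hs.le hw 2) ht]
  rw [blaschkeFactor, norm_div, div_pow, le_div_iff₀ (by nlinarith)]
  linarith

lemma exists_norm_blaschkeFactor_le {z : ℂ} (hz : ‖z‖ < 1) {R : ℝ} (hR : R < 1) :
    ∃ c, 0 ≤ c ∧ c < 1 ∧ ∀ a : ℂ, ‖a‖ ≤ R → ‖blaschkeFactor a z‖ ≤ c := by
  have hR' : max R 0 < 1 := max_lt hR one_pos
  have hcont : ContinuousOn (fun a => ‖blaschkeFactor a z‖) (closedBall 0 (max R 0)) := by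
    refine ContinuousOn.norm (ContinuousOn.div (by fun_prop) (by fun_prop) fun a ha => ?_)
    rw [← norm_ne_zero_iff]
    exact (norm_one_sub_mul_conj_pos hz.le ((mem_closedBall_zero_iff.1 ha).trans_lt hR')).ne'
  obtain ⟨a₀, ha₀, hmax⟩ := (isCompact_closedBall 0 (max R 0)).exists_isMaxOn
    (nonempty_closedBall.2 (le_max_right R 0)) hcont
  refine ⟨_, norm_nonneg _,
    norm_blaschkeFactor_lt_one hz ((mem_closedBall_zero_iff.1 ha₀).trans_lt hR'),
    fun a ha => hmax (mem_closedBall_zero_iff.2 (ha.trans (le_max_left R 0)))⟩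

end BlaschkeFactor

noncomputable def diskBoundary : Filter ℂ := comap (‖·‖) (𝓝[<] 1)

lemma eventually_diskBoundary_iff {p : ℂ → Prop} :
    (∀ᶠ z in diskBoundary, p z) ↔ ∃ r < 1, ∀ z : ℂ, r < ‖z‖ → ‖z‖ < 1 → p z := by
  rw [diskBoundary, eventually_comap, eventually_iff, mem_nhdsLT_iff_exists_Ioo_subset]
  exact ⟨fun ⟨r, hr, h⟩ => ⟨r, hr, fun z h₁ h₂ => h ⟨h₁, h₂⟩ z rfl⟩,
    fun ⟨r, hr, h⟩ => ⟨r, hr, fun _ hx z hz => h z (hz ▸ hx.1) (hz ▸ hx.2)⟩⟩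

lemma tendsto_norm_diskBoundary : Tendsto (‖·‖) diskBoundary (𝓝[<] 1) := tendsto_comap

lemma eventually_norm_lt_one_diskBoundary : ∀ᶠ z in diskBoundary, ‖z‖ < 1 :=
  tendsto_norm_diskBoundary.eventually self_mem_nhdsWithin

instance : diskBoundary.NeBot :=
  NeBot.comap_of_range_mem inferInstance <| mem_nhdsWithin_of_mem_nhds <|
    mem_of_superset (Ici_mem_nhds zero_lt_one) fun x hx => ⟨x, by simpa using hx⟩

lemma tendsto_norm_diskBoundary_of_mapsTo {f : ℂ → ℂ} (hmap : MapsTo f (ball 0 1) (ball 0 1))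
    (hbdry : ∀ ε : ℝ, 0 < ε → ∃ r : ℝ, r < 1 ∧ ∀ z : ℂ, r < ‖z‖ → ‖z‖ < 1 → 1 - ε < ‖f z‖) :
    Tendsto (‖f ·‖) diskBoundary (𝓝 1) := by
  refine tendsto_order.2 ⟨fun b hb => ?_, fun b hb => ?_⟩
  · obtain ⟨r, hr, hf⟩ := hbdry (1 - b) (by linarith)
    exact eventually_diskBoundary_iff.2 ⟨r, hr, fun z h₁ h₂ => by linarith [hf z h₁ h₂]⟩
  · filter_upwards [eventually_norm_lt_one_diskBoundary] with z hz
    exact (mem_ball_zero_iff.1 (hmap (mem_ball_zero_iff.2 hz))).trans hb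

lemma tendsto_norm_blaschkeFactor_diskBoundary {a : ℂ} (ha : ‖a‖ < 1) :
    Tendsto (‖blaschkeFactor a ·‖) diskBoundary (𝓝 1) := by
  have hlower : Tendsto (fun z : ℂ => 1 - (1 - ‖z‖ ^ 2) * ((1 + ‖a‖) / (1 - ‖a‖)))
      diskBoundary (𝓝 1) := by
    have hcont : Continuous fun t : ℝ => 1 - (1 - t ^ 2) * ((1 + ‖a‖) / (1 - ‖a‖)) := by
      fun_prop
    have := (hcont.tendsto 1).comp (tendsto_nhds_of_tendsto_nhdsWithin tendsto_norm_diskBoundary)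
    simpa [Function.comp_def] using this
  refine tendsto_of_tendsto_of_tendsto_of_le_of_le' hlower tendsto_const_nhds ?_ ?_
  all_goals filter_upwards [eventually_norm_lt_one_diskBoundary] with z hz
  · have hB := (norm_blaschkeFactor_lt_one hz ha).le
    nlinarith [one_sub_mul_le_sq_norm_blaschkeFactor hz.le ha, norm_nonneg (blaschkeFactor a z)]
  · exact (norm_blaschkeFactor_lt_one hz ha).le

lemma tendsto_norm_blaschkeProduct_diskBoundary {n : ℕ} {a : Fin n → ℂ} (ha : ∀ k, ‖a k‖ < 1) :
    Tendsto (‖blaschkeProduct a ·‖) diskBoundary (𝓝 1) := by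
  simpa [blaschkeProduct, norm_prod] using
    tendsto_finsetProd Finset.univ fun k _ => tendsto_norm_blaschkeFactor_diskBoundary (ha k)

section MaximumModulus

variable {E : Type*} [NormedAddCommGroup E] [NormedSpace ℂ E] {h : ℂ → E} {z : ℂ}

lemma norm_le_of_eventually_norm_le_diskBoundary {M : ℝ} (hd : DifferentiableOn ℂ h (ball 0 1))
    (hM : ∀ᶠ w in diskBoundary, ‖h w‖ ≤ M) (hz : z ∈ ball 0 1) : ‖h z‖ ≤ M := by
  obtain ⟨r, hr, hrM⟩ := eventually_diskBoundary_iff.1 hM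
  rw [mem_ball_zero_iff] at hz
  obtain ⟨ρ, hρ, hρ1⟩ := exists_between (max_lt hr hz)
  have hρ0 : 0 < ρ := (norm_nonneg z).trans_lt ((le_max_right _ _).trans_lt hρ)
  have hdc : DiffContOnCl ℂ h (ball 0 ρ) :=
    (hd.mono (closedBall_subset_ball hρ1)).diffContOnCl_ball le_rfl
  refine norm_le_of_forall_mem_frontier_norm_le isBounded_ball hdc (fun w hw => ?_)
    (subset_closure (mem_ball_zero_iff.2 ((le_max_right _ _).trans_lt hρ)))
  rw [frontier_ball 0 hρ0.ne', mem_sphere_zero_iff_norm] at hw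
  exact hrM w (hw ▸ (le_max_left _ _).trans_lt hρ) (hw ▸ hρ1)

lemma norm_le_of_tendsto_diskBoundary {c : ℝ} (hd : DifferentiableOn ℂ h (ball 0 1))
    (hc : Tendsto (‖h ·‖) diskBoundary (𝓝 c)) (hz : z ∈ ball 0 1) : ‖h z‖ ≤ c :=
  le_of_forall_pos_le_add fun _ hε =>
    norm_le_of_eventually_norm_le_diskBoundary hd (hc.eventually (eventually_le_nhds
      (lt_add_of_pos_right c hε))) hz

end MaximumModulus

lemma exists_eq_blaschkeFactor_mul {h : ℂ → ℂ} {a : ℂ} (hd : DifferentiableOn ℂ h (ball 0 1))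
    (ha : a ∈ ball 0 1) (hza : h a = 0) :
    ∃ g : ℂ → ℂ, DifferentiableOn ℂ g (ball 0 1) ∧
      ∀ z ∈ ball 0 1, h z = blaschkeFactor a z * g z := by
  refine ⟨fun z => (1 - z * conj a) * dslope h a z, ?_, fun z hz => ?_⟩
  · exact (by fun_prop : Differentiable ℂ fun z => 1 - z * conj a).differentiableOn.mul
      ((differentiableOn_dslope (isOpen_ball.mem_nhds ha)).2 hd)
  · have hne := (norm_one_sub_mul_conj_pos (mem_ball_zero_iff.1 hz).le
      (mem_ball_zero_iff.1 ha)).ne'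
    rw [norm_ne_zero_iff] at hne
    rw [← sub_smul_dslope_of_zero hza z, smul_eq_mul, blaschkeFactor]
    field_simp

structure BlaschkeFactorization (f : ℂ → ℂ) (n : ℕ) where
  zeros : Fin n → ℂ
  norm_zeros_lt_one : ∀ k, ‖zeros k‖ < 1
  cofactor : ℂ → ℂ
  differentiableOn_cofactor : DifferentiableOn ℂ cofactor (ball 0 1)
  eq_mul : ∀ z ∈ ball 0 1, f z = blaschkeProduct zeros z * cofactor z

namespace BlaschkeFactorization

variable {f : ℂ → ℂ} {n : ℕ}

def nil (hf : DifferentiableOn ℂ f (ball 0 1)) : BlaschkeFactorization f 0 where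
  zeros := Fin.elim0
  norm_zeros_lt_one k := k.elim0
  cofactor := f
  differentiableOn_cofactor := hf
  eq_mul z _ := by simp [blaschkeProduct]

noncomputable def cons (F : BlaschkeFactorization f n) {a : ℂ} (ha : a ∈ ball 0 1)
    (hza : F.cofactor a = 0) : BlaschkeFactorization f (n + 1) :=
  have hg := exists_eq_blaschkeFactor_mul F.differentiableOn_cofactor ha hza
  { zeros := Fin.cons a F.zeros
    norm_zeros_lt_one := Fin.cases (mem_ball_zero_iff.1 ha) F.norm_zeros_lt_one
    cofactor := hg.choose
    differentiableOn_cofactor := hg.choose_spec.1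
    eq_mul z hz := by
      simp only [F.eq_mul z hz, hg.choose_spec.2 z hz, blaschkeProduct, Fin.prod_univ_succ,
        Fin.cons_zero, Fin.cons_succ]
      ring }

lemma apply_zeros_eq_zero (F : BlaschkeFactorization f n) (k : Fin n) : f (F.zeros k) = 0 := by
  rw [F.eq_mul _ (mem_ball_zero_iff.2 (F.norm_zeros_lt_one k)), blaschkeProduct,
    Finset.prod_eq_zero (Finset.mem_univ k) (blaschkeFactor_self _), zero_mul]

lemma tendsto_norm_cofactor (F : BlaschkeFactorization f n)
    (hf : Tendsto (‖f ·‖) diskBoundary (𝓝 1)) :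
    Tendsto (‖F.cofactor ·‖) diskBoundary (𝓝 1) := by
  have hB := tendsto_norm_blaschkeProduct_diskBoundary F.norm_zeros_lt_one
  have hquot := hf.div hB one_ne_zero
  rw [div_one] at hquot
  refine hquot.congr' ?_
  filter_upwards [eventually_norm_lt_one_diskBoundary, hB.eventually_ne one_ne_zero]
    with z hz hBz
  rw [Pi.div_apply, F.eq_mul z (mem_ball_zero_iff.2 hz), norm_mul, mul_div_cancel_left₀ _ hBz]

lemma norm_le_norm_blaschkeProduct (F : BlaschkeFactorization f n)
    (hf : Tendsto (‖f ·‖) diskBoundary (𝓝 1)) {z : ℂ} (hz : z ∈ ball 0 1) :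
    ‖f z‖ ≤ ‖blaschkeProduct F.zeros z‖ := by
  rw [F.eq_mul z hz, norm_mul]
  exact mul_le_of_le_one_right (norm_nonneg _)
    (norm_le_of_tendsto_diskBoundary F.differentiableOn_cofactor (F.tendsto_norm_cofactor hf) hz)

end BlaschkeFactorization

theorem exists_blaschkeFactorization_cofactor_ne_zero {f : ℂ → ℂ}
    (hd : DifferentiableOn ℂ f (ball 0 1)) (hf : Tendsto (‖f ·‖) diskBoundary (𝓝 1)) :
    ∃ n, ∃ F : BlaschkeFactorization f n, ∀ z ∈ ball 0 1, F.cofactor z ≠ 0 := by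
  by_contra! H
  have hall : ∀ n, Nonempty (BlaschkeFactorization f n) := by
    intro n
    induction n with
    | zero => exact ⟨.nil hd⟩
    | succ n ih =>
      obtain ⟨F⟩ := ih
      obtain ⟨a, ha, hza⟩ := H n F
      exact ⟨F.cons ha hza⟩
  have hpos : ∀ᶠ z in diskBoundary, 0 < ‖f z‖ := hf.eventually (lt_mem_nhds one_pos)
  obtain ⟨z₀, hz₀, hfz₀⟩ := (eventually_norm_lt_one_diskBoundary.and hpos).exists
  obtain ⟨R, hR, hzeros⟩ := eventually_diskBoundary_iff.1 hpos
  obtain ⟨c, hc0, hc, hcbound⟩ := exists_norm_blaschkeFactor_le hz₀ hR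
  have hdecay : ∀ n, ‖f z₀‖ ≤ c ^ n := by
    intro n
    obtain ⟨F⟩ := hall n
    have hRk : ∀ k, ‖F.zeros k‖ ≤ R := fun k => not_lt.1 fun hk =>
      (hzeros _ hk (F.norm_zeros_lt_one k)).ne' (by rw [F.apply_zeros_eq_zero, norm_zero])
    calc ‖f z₀‖ ≤ ‖blaschkeProduct F.zeros z₀‖ :=
          F.norm_le_norm_blaschkeProduct hf (mem_ball_zero_iff.2 hz₀)
      _ = ∏ k, ‖blaschkeFactor (F.zeros k) z₀‖ := by rw [blaschkeProduct, norm_prod]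
      _ ≤ ∏ _k : Fin n, c := Finset.prod_le_prod (fun _ _ => norm_nonneg _)
          fun k _ => hcbound _ (hRk k)
      _ = c ^ n := by simp
  obtain ⟨n, hn⟩ := ((tendsto_pow_atTop_nhds_zero_of_lt_one hc0 hc).eventually
    (gt_mem_nhds hfz₀)).exists
  exact (hdecay n).not_gt hn

lemma exists_eq_exp_of_tendsto_norm {h : ℂ → ℂ} (hd : DifferentiableOn ℂ h (ball 0 1))
    (hne : ∀ z ∈ ball 0 1, h z ≠ 0) (hlim : Tendsto (‖h ·‖) diskBoundary (𝓝 1)) :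
    ∃ s : ℝ, ∀ z ∈ ball 0 1, h z = exp (I * s) := by
  have hinv : Tendsto (fun z => ‖(h z)⁻¹‖) diskBoundary (𝓝 1) := by
    simpa only [norm_inv, inv_one] using hlim.inv₀ one_ne_zero
  have hnorm : ∀ z ∈ ball 0 1, ‖h z‖ = 1 := fun z hz => by
    have hle := norm_le_of_tendsto_diskBoundary hd hlim hz
    have hge := norm_le_of_tendsto_diskBoundary (hd.inv hne) hinv hz
    rw [Pi.inv_apply, norm_inv, inv_le_one₀ (norm_pos_iff.2 (hne z hz))] at hge
    exact hle.antisymm hge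
  have h0 : (0 : ℂ) ∈ ball 0 1 := mem_ball_self one_pos
  have hconst := eqOn_of_isPreconnected_of_isMaxOn_norm (convex_ball 0 1).isPreconnected
    isOpen_ball hd h0 fun z hz => by simp [hnorm z hz, hnorm 0 h0]
  refine ⟨arg (h 0), fun z hz => ?_⟩
  have hpolar := norm_mul_exp_arg_mul_I (h 0)
  rw [hnorm 0 h0, ofReal_one, one_mul] at hpolar
  rw [hconst hz, Function.const_apply, mul_comm, hpolar]

theorem fatou_blaschke (f : ℂ → ℂ)
    (hf : DifferentiableOn ℂ f (Metric.ball 0 1))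
    (hmap : Set.MapsTo f (Metric.ball (0:ℂ) 1) (Metric.ball 0 1))
    (hsurj : Set.SurjOn f (Metric.ball (0:ℂ) 1) (Metric.ball 0 1))
    (hbdry : ∀ ε : ℝ, 0 < ε → ∃ r : ℝ, r < 1 ∧
      ∀ z : ℂ, r < ‖z‖ → ‖z‖ < 1 → 1 - ε < ‖f z‖) :
    ∃ d : ℕ, 1 ≤ d ∧ ∃ (s : ℝ) (a : Fin d → ℂ), (∀ k, ‖a k‖ < 1) ∧
      ∀ z ∈ Metric.ball (0:ℂ) 1,
        f z = Complex.exp (Complex.I * s) * ∏ k, (z - a k) / (1 - z * conj (a k)) := by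
  have hlim := tendsto_norm_diskBoundary_of_mapsTo hmap hbdry
  obtain ⟨d, F, hne⟩ := exists_blaschkeFactorization_cofactor_ne_zero hf hlim
  obtain ⟨s, hs⟩ := exists_eq_exp_of_tendsto_norm F.differentiableOn_cofactor hne
    (F.tendsto_norm_cofactor hlim)
  obtain ⟨z₀, hz₀, hfz₀⟩ := hsurj (mem_ball_self one_pos)
  have hd : d ≠ 0 := by
    rintro rfl
    have hf₀ := F.eq_mul z₀ hz₀
    simp only [hfz₀, blaschkeProduct, Finset.univ_eq_empty, Finset.prod_empty, one_mul] at hf₀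
    exact hne z₀ hz₀ hf₀.symm
  refine ⟨d, Nat.one_le_iff_ne_zero.2 hd, s, F.zeros, F.norm_zeros_lt_one, fun z hz => ?_⟩
  rw [F.eq_mul z hz, hs z hz, mul_comm]
  rfl
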